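/- arXiv:0909.0659 — 6 statements merged into one kernel-verified Lean document; each statement's English description precedes it below -/
import Mathlib

section
/- The function H(φ,y) = φ⁴ − 2cφ³ + (c² + g)φ² − 2(cg + h)φ − y²(φ − c)² is a first integral of the planar system φ' = y, y' = [(2φ² − cφ − y² + g)(φ − c) − h]/(φ − c)², i.e., for any solution (φ(ξ), y(ξ)) with φ(ξ) ≠ c, the quantity H(φ(ξ), y(ξ)) is constant in ξ. -/
/-!
With `P(φ) = (2φ² − cφ + g)(φ − c) − h`, the system reads `(φ − c)² y' = P(φ) − y²(φ − c)`,
and `H` is built so that `∂H/∂φ = 2P(φ) − 2y²(φ − c)` and `∂H/∂y = −2y(φ − c)²`.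
Along a solution, `dH/dξ = y ∂H/∂φ + y' ∂H/∂y = 2y (P(φ) − y²(φ − c) − (φ − c)² y') = 0`,
so `H` is constant by the mean value theorem.
-/

namespace DegasperisProcesi

def firstIntegral (c g h φ y : ℝ) : ℝ :=
  φ ^ 4 - 2 * c * φ ^ 3 + (c ^ 2 + g) * φ ^ 2 - 2 * (c * g + h) * φ - y ^ 2 * (φ - c) ^ 2

theorem hasDerivAt_firstIntegral_comp {c g h t y' : ℝ} {φ y : ℝ → ℝ}
    (hφ : HasDerivAt φ (y t) t) (hy : HasDerivAt y y' t)
    (hsys : (φ t - c) ^ 2 * y' =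
      (2 * φ t ^ 2 - c * φ t - y t ^ 2 + g) * (φ t - c) - h) :
    HasDerivAt (fun s => firstIntegral c g h (φ s) (y s)) 0 t := by
  have hH : HasDerivAt (fun s => firstIntegral c g h (φ s) (y s))
      (2 * y t * (((2 * φ t ^ 2 - c * φ t - y t ^ 2 + g) * (φ t - c) - h)
        - (φ t - c) ^ 2 * y')) t := by
    refine (((((hφ.pow 4).sub ((hφ.pow 3).const_mul (2 * c))).add
      ((hφ.pow 2).const_mul (c ^ 2 + g))).sub (hφ.const_mul (2 * (c * g + h)))).sub
      ((hy.pow 2).mul ((hφ.sub_const c).pow 2))).congr_deriv ?_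
    simp only [Pi.pow_apply]
    ring
  rwa [hsys, sub_self, mul_zero] at hH

end DegasperisProcesi

open DegasperisProcesi in
/-- `H(φ,y)` is a first integral of the singular traveling-wave system. -/
theorem stmt1 (c g h : ℝ) (φ y : ℝ → ℝ)
    (hφ : Differentiable ℝ φ) (hy : Differentiable ℝ y)
    (hne : ∀ ξ : ℝ, φ ξ ≠ c)
    (h1 : ∀ ξ : ℝ, deriv φ ξ = y ξ)
    (h2 : ∀ ξ : ℝ, deriv y ξ =
      ((2 * (φ ξ)^2 - c * φ ξ - (y ξ)^2 + g) * (φ ξ - c) - h) / (φ ξ - c)^2) :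
    ∀ ξ₁ ξ₂ : ℝ,
      (φ ξ₁)^4 - 2*c*(φ ξ₁)^3 + (c^2 + g)*(φ ξ₁)^2 - 2*(c*g + h)*(φ ξ₁)
        - (y ξ₁)^2 * (φ ξ₁ - c)^2
      = (φ ξ₂)^4 - 2*c*(φ ξ₂)^3 + (c^2 + g)*(φ ξ₂)^2 - 2*(c*g + h)*(φ ξ₂)
        - (y ξ₂)^2 * (φ ξ₂ - c)^2 := by
  have hconst (ξ : ℝ) : HasDerivAt (fun s => firstIntegral c g h (φ s) (y s)) 0 ξ := by
    refine hasDerivAt_firstIntegral_comp ((hφ ξ).hasDerivAt.congr_deriv (h1 ξ))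
      (hy ξ).hasDerivAt ?_
    rw [h2, mul_div_cancel₀ _ (pow_ne_zero 2 (sub_ne_zero.mpr (hne ξ)))]
  exact is_const_of_deriv_eq_zero (fun ξ => (hconst ξ).differentiableAt)
    (fun ξ => (hconst ξ).deriv)
end

section
/- The function H(φ,y) = φ⁴ − 2cφ³ + (c² + g)φ² − 2(cg + h)φ − y²(φ − c)² is a first integral of the regularized system dφ/dζ = y(φ − c)², dy/dζ = (2φ² − cφ − y² + g)(φ − c) − h, for all (φ, y) (including φ = c). -/
/-!
The regularized system is Hamiltonian up to a factor: writing `H` for the first integral,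
`∂H/∂φ = 2 dy/dζ` and `∂H/∂y = -2 dφ/dζ`, so `dH/dζ = 2 (dy/dζ)(dφ/dζ) - 2 (dφ/dζ)(dy/dζ) = 0`
along every solution, and `H` is constant because its derivative vanishes on all of `ℝ`.
-/

namespace RegularizedSystem

variable (c g h : ℝ)

def firstIntegral (φ y : ℝ) : ℝ :=
  φ ^ 4 - 2 * c * φ ^ 3 + (c ^ 2 + g) * φ ^ 2 - 2 * (c * g + h) * φ - y ^ 2 * (φ - c) ^ 2

lemma hasDerivAt_firstIntegral {φ y : ℝ → ℝ} {φ' y' t : ℝ}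
    (hφ : HasDerivAt φ φ' t) (hy : HasDerivAt y y' t) :
    HasDerivAt (fun s => firstIntegral c g h (φ s) (y s))
      (2 * ((2 * φ t ^ 2 - c * φ t - y t ^ 2 + g) * (φ t - c) - h) * φ'
        - 2 * (y t * (φ t - c) ^ 2) * y') t := by
  have H := ((((hφ.pow 4).sub ((hφ.pow 3).const_mul (2 * c))).add
    ((hφ.pow 2).const_mul (c ^ 2 + g))).sub (hφ.const_mul (2 * (c * g + h)))).sub
    ((hy.pow 2).mul ((hφ.sub_const c).pow 2))
  exact H.congr_deriv (by simp only [Pi.pow_apply]; ring)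

end RegularizedSystem

open RegularizedSystem in
/-- `H(φ,y)` is a first integral of the regularized system, for all `(φ,y)`. -/
theorem stmt2 (c g h : ℝ) (φ y : ℝ → ℝ)
    (hφ : Differentiable ℝ φ) (hy : Differentiable ℝ y)
    (h1 : ∀ ζ : ℝ, deriv φ ζ = y ζ * (φ ζ - c)^2)
    (h2 : ∀ ζ : ℝ, deriv y ζ =
      (2 * (φ ζ)^2 - c * φ ζ - (y ζ)^2 + g) * (φ ζ - c) - h) :
    ∀ ζ₁ ζ₂ : ℝ,
      (φ ζ₁)^4 - 2*c*(φ ζ₁)^3 + (c^2 + g)*(φ ζ₁)^2 - 2*(c*g + h)*(φ ζ₁)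
        - (y ζ₁)^2 * (φ ζ₁ - c)^2
      = (φ ζ₂)^4 - 2*c*(φ ζ₂)^3 + (c^2 + g)*(φ ζ₂)^2 - 2*(c*g + h)*(φ ζ₂)
        - (y ζ₂)^2 * (φ ζ₂ - c)^2 := by
  have hH : ∀ ζ, HasDerivAt (fun s => firstIntegral c g h (φ s) (y s)) 0 ζ := fun ζ =>
    (hasDerivAt_firstIntegral c g h (h1 ζ ▸ (hφ ζ).hasDerivAt)
      (h2 ζ ▸ (hy ζ).hasDerivAt)).congr_deriv (by ring)
  exact is_const_of_deriv_eq_zero (fun ζ => (hH ζ).differentiableAt) (fun ζ => (hH ζ).deriv)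
end

section
/- Let c > 0, h = (3c/32)(c² − 8g), and c²/8 < g < 13c²/32. Then with φ₁₋ = (5c − √(13c² − 32g))/8, the point (φ₁₋, 0) is a center of the system dφ/dζ = y(φ − c)², dy/dζ = (2φ² − cφ − y² + g)(φ − c) − h in the sense that the Jacobian determinant J(φ₁₋, 0) = −(6φ₁₋² − 6cφ₁₋ + c² + g)(φ₁₋ − c)² is strictly positive. -/
/-!
Write `s = √(13c² − 32g)`, so that `φ₁₋ = (5c − s)/8` and `g = (13c² − s²)/32`. Substituting,
the quadratic factor of the Jacobian collapses to `6φ₁₋² − 6cφ₁₋ + c² + g = s(s − 3c)/16`, and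
`0 < s < 3c` is exactly the condition `c²/8 < g < 13c²/32`. The remaining factor
`(φ₁₋ − c)² = (3c + s)²/64` is positive since `c > 0`.
-/

lemma neg_jacobian_quadratic_eq (c g s : ℝ) (hs : s ^ 2 = 13 * c ^ 2 - 32 * g) :
    -(6 * ((5 * c - s) / 8) ^ 2 - 6 * c * ((5 * c - s) / 8) + c ^ 2 + g) = s * (3 * c - s) / 16 := by
  linear_combination -hs / 32

lemma sqrt_discriminant_mem_Ioo (c g : ℝ) (hc : 0 < c) (hg1 : c ^ 2 / 8 < g)
    (hg2 : g < 13 * c ^ 2 / 32) :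
    Real.sqrt (13 * c ^ 2 - 32 * g) ∈ Set.Ioo 0 (3 * c) := by
  constructor
  · exact Real.sqrt_pos.mpr (by linarith)
  · rw [Real.sqrt_lt' (by positivity)]
    linarith

theorem stmt7_general (c g : ℝ) (hc : 0 < c)
    (hg1 : c^2 / 8 < g) (hg2 : g < 13 * c^2 / 32) :
    0 < -(6 * ((5 * c - Real.sqrt (13 * c^2 - 32 * g)) / 8)^2
          - 6 * c * ((5 * c - Real.sqrt (13 * c^2 - 32 * g)) / 8) + c^2 + g)
        * ((5 * c - Real.sqrt (13 * c^2 - 32 * g)) / 8 - c)^2 := by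
  obtain ⟨hs_pos, hs_lt⟩ := sqrt_discriminant_mem_Ioo c g hc hg1 hg2
  set s := Real.sqrt (13 * c ^ 2 - 32 * g)
  have hs_sq : s ^ 2 = 13 * c ^ 2 - 32 * g := Real.sq_sqrt (by linarith)
  rw [neg_jacobian_quadratic_eq c g s hs_sq]
  have hφ_ne : (5 * c - s) / 8 - c ≠ 0 := by linarith
  have hquad_pos : 0 < s * (3 * c - s) / 16 := by
    have := sub_pos.mpr hs_lt
    positivity
  positivity

/-- In the regime `c²/8 < g < 13c²/32`, the point `(φ₁₋, 0)` is a linear center: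
the Jacobian determinant there is strictly positive. -/
theorem stmt7 (c g : ℝ) (hc : 0 < c)
    (h : ℝ) (hh : h = (3 * c / 32) * (c^2 - 8 * g))
    (hg1 : c^2 / 8 < g) (hg2 : g < 13 * c^2 / 32) :
    0 < -(6 * ((5 * c - Real.sqrt (13 * c^2 - 32 * g)) / 8)^2
          - 6 * c * ((5 * c - Real.sqrt (13 * c^2 - 32 * g)) / 8) + c^2 + g)
        * ((5 * c - Real.sqrt (13 * c^2 - 32 * g)) / 8 - c)^2 :=
  stmt7_general c g hc hg1 hg2
end

section
/- Let c > 0, h = (3c/32)(c² − 8g), and g < c²/8. Then the points (φ₁±, 0) with φ₁± = (5c ± √(13c² − 32g))/8 are saddle points of the system dφ/dζ = y(φ − c)², dy/dζ = (2φ² − cφ − y² + g)(φ − c) − h, in the sense that J(φ₁±, 0) < 0, while (c/4, 0) is a center in the sense that J(c/4, 0) > 0. -/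
/-!
Write `s = √(13c² − 32g)`. Since `g < c²/8`, `s² > 9c²`. Eliminating `g` through `s²`, the
determinant at `φ = (5c + t)/8` with `t² = s²` factors as `−t(t + 3c)(t − 3c)²/1024`, and
`t(t + 3c)(t − 3c)² = (t² − 9c²) · t(t − 3c)` is positive for both `t = ±s`. At `φ = c/4` the
determinant is `(9c²/16)(c²/8 − g)`.
-/

/-- `J(φ, 0)`, the determinant of the linearization at the equilibrium `(φ, 0)`. -/
def equilibriumJacobianDet (c g φ : ℝ) : ℝ :=
  -(6 * φ ^ 2 - 6 * c * φ + c ^ 2 + g) * (φ - c) ^ 2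

lemma equilibriumJacobianDet_eq_of_sq_eq {c g t : ℝ} (ht : t ^ 2 = 13 * c ^ 2 - 32 * g) :
    equilibriumJacobianDet c g ((5 * c + t) / 8) = -(t * (t + 3 * c) * (t - 3 * c) ^ 2) / 1024 := by
  have hg : g = (13 * c ^ 2 - t ^ 2) / 32 := by linarith
  subst hg
  unfold equilibriumJacobianDet
  ring

lemma equilibriumJacobianDet_neg_of_sq_eq {c g t : ℝ} (ht : t ^ 2 = 13 * c ^ 2 - 32 * g)
    (hct : 9 * c ^ 2 < t ^ 2) : equilibriumJacobianDet c g ((5 * c + t) / 8) < 0 := by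
  have hgap : 0 < t ^ 2 - 9 * c ^ 2 := by linarith
  have hside : 0 < t * (t - 3 * c) := by nlinarith [sq_nonneg (t + 3 * c)]
  have hprod : t * (t + 3 * c) * (t - 3 * c) ^ 2 = (t ^ 2 - 9 * c ^ 2) * (t * (t - 3 * c)) := by
    ring
  rw [equilibriumJacobianDet_eq_of_sq_eq ht, hprod]
  have := mul_pos hgap hside
  linarith

lemma equilibriumJacobianDet_quarter (c g : ℝ) :
    equilibriumJacobianDet c g (c / 4) = 9 * c ^ 2 / 16 * (c ^ 2 / 8 - g) := by
  unfold equilibriumJacobianDet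
  ring

theorem stmt8_general (c g : ℝ) (hc : 0 < c)
    (hg : g < c^2 / 8) :
    (-(6 * ((5 * c + Real.sqrt (13 * c^2 - 32 * g)) / 8)^2
        - 6 * c * ((5 * c + Real.sqrt (13 * c^2 - 32 * g)) / 8) + c^2 + g)
      * ((5 * c + Real.sqrt (13 * c^2 - 32 * g)) / 8 - c)^2 < 0) ∧
    (-(6 * ((5 * c - Real.sqrt (13 * c^2 - 32 * g)) / 8)^2
        - 6 * c * ((5 * c - Real.sqrt (13 * c^2 - 32 * g)) / 8) + c^2 + g)
      * ((5 * c - Real.sqrt (13 * c^2 - 32 * g)) / 8 - c)^2 < 0) ∧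
    (0 < -(6 * (c / 4)^2 - 6 * c * (c / 4) + c^2 + g) * (c / 4 - c)^2) := by
  set s := Real.sqrt (13 * c^2 - 32 * g)
  have hs : s ^ 2 = 13 * c ^ 2 - 32 * g := Real.sq_sqrt (by nlinarith)
  have hcs : 9 * c ^ 2 < s ^ 2 := by linarith
  refine ⟨equilibriumJacobianDet_neg_of_sq_eq hs hcs, ?_, ?_⟩
  · have hs' : (-s) ^ 2 = 13 * c ^ 2 - 32 * g := by rw [neg_sq, hs]
    have := equilibriumJacobianDet_neg_of_sq_eq hs' (by rwa [neg_sq])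
    rwa [← sub_eq_add_neg] at this
  · change 0 < equilibriumJacobianDet c g (c / 4)
    rw [equilibriumJacobianDet_quarter]
    have : 0 < c ^ 2 / 8 - g := by linarith
    positivity

/-- For `g < c²/8`: `(φ₁±, 0)` are saddles (`J < 0`) and `(c/4, 0)` is a center (`J > 0`). -/
theorem stmt8 (c g : ℝ) (hc : 0 < c)
    (h : ℝ) (hh : h = (3 * c / 32) * (c^2 - 8 * g)) (hg : g < c^2 / 8) :
    (-(6 * ((5 * c + Real.sqrt (13 * c^2 - 32 * g)) / 8)^2
        - 6 * c * ((5 * c + Real.sqrt (13 * c^2 - 32 * g)) / 8) + c^2 + g)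
      * ((5 * c + Real.sqrt (13 * c^2 - 32 * g)) / 8 - c)^2 < 0) ∧
    (-(6 * ((5 * c - Real.sqrt (13 * c^2 - 32 * g)) / 8)^2
        - 6 * c * ((5 * c - Real.sqrt (13 * c^2 - 32 * g)) / 8) + c^2 + g)
      * ((5 * c - Real.sqrt (13 * c^2 - 32 * g)) / 8 - c)^2 < 0) ∧
    (0 < -(6 * (c / 4)^2 - 6 * c * (c / 4) + c^2 + g) * (c / 4 - c)^2) :=
  stmt8_general c g hc hg
end

section
/- Let c > 0 and let φ : ℝ → ℝ be a differentiable function with c/4 < φ(ξ) < 3c/4 for all ξ, satisfying φ'(ξ) = (φ(ξ) − c/4)(φ(ξ) − 3c/4)/(φ(ξ) − c). Then the quantity (φ(ξ) − c/4)^(3/2) · exp(−ξ) / (3c/4 − φ(ξ))^(1/2) is constant in ξ. -/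
/-!
Taking logarithms, the claim is that `G = (3/2) log (φ - c/4) - ξ - (1/2) log (3c/4 - φ)` is
constant. With `u = φ - c/4` and `v = 3c/4 - φ` one has `3v + u = -2(φ - c)`, so
`G' = φ' (3v + u) / (2uv) - 1 = -φ' (φ - c) / (uv) - 1`, which vanishes exactly by the ODE
`φ' = -uv / (φ - c)`.
-/

open Real

lemma rpow_mul_exp_neg_div_rpow {x y : ℝ} (hx : 0 < x) (hy : 0 < y) (a b t : ℝ) :
    x ^ a * exp (-t) / y ^ b = exp (a * log x - t - b * log y) := by
  rw [rpow_def_of_pos hx, rpow_def_of_pos hy, ← exp_add, ← exp_sub]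
  ring_nf

lemma hasDerivAt_kink_log_zero {φ : ℝ → ℝ} {c p x : ℝ} (hφ : HasDerivAt φ p x)
    (hlo : c / 4 < φ x) (hhi : φ x < 3 * c / 4)
    (hp : p = (φ x - c / 4) * (φ x - 3 * c / 4) / (φ x - c)) :
    HasDerivAt (fun ξ => 3 / 2 * log (φ ξ - c / 4) - ξ - 1 / 2 * log (3 * c / 4 - φ ξ)) 0 x := by
  have hu : φ x - c / 4 ≠ 0 := by linarith
  have hv : 3 * c / 4 - φ x ≠ 0 := by linarith
  refine ((((hφ.sub_const (c / 4)).log hu).const_mul (3 / 2)).sub (hasDerivAt_id' x) |>.sub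
    (((hφ.const_sub (3 * c / 4)).log hv).const_mul (1 / 2))).congr_deriv ?_
  have hu' : φ x * 4 - c ≠ 0 := by linarith
  have hv' : 3 * c - φ x * 4 ≠ 0 := by linarith
  have hw : φ x - c ≠ 0 := by linarith
  rw [hp]
  field_simp
  ring

theorem stmt11_general (c : ℝ) (φ : ℝ → ℝ)
    (hbd : ∀ ξ : ℝ, c/4 < φ ξ ∧ φ ξ < 3*c/4)
    (hode : ∀ ξ : ℝ, deriv φ ξ = (φ ξ - c/4) * (φ ξ - 3*c/4) / (φ ξ - c)) :
    ∀ ξ₁ ξ₂ : ℝ,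
      (φ ξ₁ - c/4) ^ ((3:ℝ)/2) * Real.exp (-ξ₁) / (3*c/4 - φ ξ₁) ^ ((1:ℝ)/2)
      = (φ ξ₂ - c/4) ^ ((3:ℝ)/2) * Real.exp (-ξ₂) / (3*c/4 - φ ξ₂) ^ ((1:ℝ)/2) := by
  -- The right-hand side of the ODE never vanishes, so `deriv φ ξ` is not the junk value `0`.
  have hφ : ∀ ξ, HasDerivAt φ (deriv φ ξ) ξ := fun ξ => by
    obtain ⟨hlo, hhi⟩ := hbd ξ
    refine (differentiableAt_of_deriv_ne_zero ?_).hasDerivAt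
    rw [hode ξ]
    exact div_ne_zero (mul_ne_zero (by linarith) (by linarith)) (by linarith)
  have hG ξ := hasDerivAt_kink_log_zero (hφ ξ) (hbd ξ).1 (hbd ξ).2 (hode ξ)
  have hconst := is_const_of_deriv_eq_zero (fun ξ => (hG ξ).differentiableAt)
    (fun ξ => (hG ξ).deriv)
  intro ξ₁ ξ₂
  rw [rpow_mul_exp_neg_div_rpow (by linarith [hbd ξ₁]) (by linarith [hbd ξ₁]),
    rpow_mul_exp_neg_div_rpow (by linarith [hbd ξ₂]) (by linarith [hbd ξ₂]),
    hconst ξ₁ ξ₂]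

/-- Along any solution of the kink ODE, the quantity
`(φ − c/4)^{3/2} e^{−ξ} / (3c/4 − φ)^{1/2}` is constant. -/
theorem stmt11 (c : ℝ) (hc : 0 < c) (φ : ℝ → ℝ)
    (hφ : Differentiable ℝ φ)
    (hbd : ∀ ξ : ℝ, c/4 < φ ξ ∧ φ ξ < 3*c/4)
    (hode : ∀ ξ : ℝ, deriv φ ξ = (φ ξ - c/4) * (φ ξ - 3*c/4) / (φ ξ - c)) :
    ∀ ξ₁ ξ₂ : ℝ,
      (φ ξ₁ - c/4) ^ ((3:ℝ)/2) * Real.exp (-ξ₁) / (3*c/4 - φ ξ₁) ^ ((1:ℝ)/2)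
      = (φ ξ₂ - c/4) ^ ((3:ℝ)/2) * Real.exp (-ξ₂) / (3*c/4 - φ ξ₂) ^ ((1:ℝ)/2) :=
  stmt11_general c φ hbd hode
end

section
/- Let c > 0 and let φ : ℝ → (c/4, 3c/4) be the kink solution defined implicitly by (φ(ξ) − c/4)^(3/2) = (3c/4 − φ(ξ))^(1/2) e^{ξ}. Define ψ(ξ) = c³/(16(φ(ξ) − c)). Then ψ is strictly decreasing, ψ(ξ) → −c²/12 as ξ → −∞, and ψ(ξ) → −c²/4 as ξ → +∞; i.e., ψ is an antikink. -/
/-!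
Write `a = c/4`, `b = 3c/4`. The implicit relation `(φ - a)^(3/2) = (b - φ)^(1/2) e^ξ` forces
`φ` to increase, since raising `φ` raises the left side and lowers the factor `(b - φ)^(1/2)`.
Bounding the other side by `(b - a)^(1/2) e^ξ`, resp. `(φ - a)^(3/2) ≤ (b - a)^(3/2)`, shows that
`φ → a` at `-∞` and `φ → b` at `+∞`. Finally `ψ = c³/(16(φ - c))` is a strictly decreasing
continuous function of `φ` on `(-∞, c)`, which turns these facts into the antikink properties.
-/

open Filter Topology Set Real

theorem tendsto_zero_of_rpow_le {α : Type*} {l : Filter α} {u v : α → ℝ} {p : ℝ} (hp : 0 < p)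
    (hu : ∀ x, 0 ≤ u x) (hle : ∀ x, u x ^ p ≤ v x) (hv : Tendsto v l (𝓝 0)) :
    Tendsto u l (𝓝 0) := by
  have hv_root : Tendsto (fun x => v x ^ p⁻¹) l (𝓝 0) := by
    have := (continuousAt_rpow_const 0 p⁻¹ (Or.inr (inv_nonneg.2 hp.le))).tendsto.comp hv
    rwa [zero_rpow (inv_ne_zero hp.ne')] at this
  refine tendsto_of_tendsto_of_tendsto_of_le_of_le tendsto_const_nhds hv_root hu fun x => ?_
  calc u x = (u x ^ p) ^ p⁻¹ := (rpow_rpow_inv (hu x) hp.ne').symm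
    _ ≤ v x ^ p⁻¹ := rpow_le_rpow (rpow_nonneg (hu x) p) (hle x) (inv_nonneg.2 hp.le)

section ImplicitProfile

variable {a b p q : ℝ} {φ : ℝ → ℝ}

theorem strictMono_of_rpow_eq_rpow_mul_exp (hp : 0 ≤ p) (hq : 0 ≤ q)
    (hφ : ∀ ξ, φ ξ ∈ Ioo a b) (himp : ∀ ξ, (φ ξ - a) ^ p = (b - φ ξ) ^ q * exp ξ) :
    StrictMono φ := by
  intro ξ₁ ξ₂ hξ
  by_contra! hle
  have hφ₁ := hφ ξ₁
  have hφ₂ := hφ ξ₂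
  have hpos : 0 < (b - φ ξ₂) ^ q := rpow_pos_of_pos (sub_pos.2 hφ₂.2) q
  have hcontra := calc (φ ξ₁ - a) ^ p
      = (b - φ ξ₁) ^ q * exp ξ₁ := himp ξ₁
    _ ≤ (b - φ ξ₂) ^ q * exp ξ₁ := by gcongr; linarith [hφ₁.2]
    _ < (b - φ ξ₂) ^ q * exp ξ₂ := by gcongr
    _ = (φ ξ₂ - a) ^ p := (himp ξ₂).symm
    _ ≤ (φ ξ₁ - a) ^ p := by gcongr; linarith [hφ₂.1]
  exact lt_irrefl _ hcontra

theorem tendsto_atBot_of_rpow_eq_rpow_mul_exp (hp : 0 < p) (hq : 0 ≤ q)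
    (hφ : ∀ ξ, φ ξ ∈ Ioo a b) (himp : ∀ ξ, (φ ξ - a) ^ p = (b - φ ξ) ^ q * exp ξ) :
    Tendsto φ atBot (𝓝 a) := by
  refine tendsto_sub_nhds_zero_iff.1 <|
    tendsto_zero_of_rpow_le (v := fun ξ => (b - a) ^ q * exp ξ) hp
      (fun ξ => sub_nonneg.2 (hφ ξ).1.le) (fun ξ => ?_)
      (by simpa using tendsto_exp_atBot.const_mul _)
  rw [himp ξ]
  gcongr
  · exact sub_nonneg.2 (hφ ξ).2.le
  · exact (hφ ξ).1.le

theorem tendsto_atTop_of_rpow_eq_rpow_mul_exp (hp : 0 ≤ p) (hq : 0 < q)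
    (hφ : ∀ ξ, φ ξ ∈ Ioo a b) (himp : ∀ ξ, (φ ξ - a) ^ p = (b - φ ξ) ^ q * exp ξ) :
    Tendsto φ atTop (𝓝 b) := by
  have hgap : Tendsto (fun ξ => b - φ ξ) atTop (𝓝 0) := by
    refine tendsto_zero_of_rpow_le (v := fun ξ => (b - a) ^ p * exp (-ξ))
      hq (fun ξ => sub_nonneg.2 (hφ ξ).2.le) (fun ξ => ?_)
      (by simpa using tendsto_exp_neg_atTop_nhds_zero.const_mul _)
    have hsolved : (b - φ ξ) ^ q = (φ ξ - a) ^ p * exp (-ξ) := by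
      rw [himp ξ, mul_assoc, ← exp_add, add_neg_cancel, exp_zero, mul_one]
    rw [hsolved]
    gcongr
    · exact sub_nonneg.2 (hφ ξ).1.le
    · exact (hφ ξ).2.le
  simpa using (tendsto_const_nhds (x := b)).sub hgap

end ImplicitProfile

theorem strictAntiOn_div_mul_sub {k m c : ℝ} (hk : 0 < k) (hm : 0 < m) :
    StrictAntiOn (fun x => k / (m * (x - c))) (Iio c) := by
  intro x hx y hy hxy
  have hy' : m * (y - c) < 0 := mul_neg_of_pos_of_neg hm (sub_neg.2 hy)
  have : m * (x - c) < m * (y - c) := by gcongr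
  have := mul_lt_mul_of_pos_left (one_div_lt_one_div_of_neg_of_lt hy' this) hk
  simpa only [mul_one_div] using this

/-- The second component `ψ = c³/(16(φ − c))` along the kink `φ` is an antikink:
strictly decreasing, with limits `−c²/12` at `−∞` and `−c²/4` at `+∞`. -/
theorem stmt13 (c : ℝ) (hc : 0 < c) (φ : ℝ → ℝ)
    (hbd : ∀ ξ : ℝ, φ ξ ∈ Set.Ioo (c/4) (3*c/4))
    (himp : ∀ ξ : ℝ,
      (φ ξ - c/4) ^ ((3:ℝ)/2) = (3*c/4 - φ ξ) ^ ((1:ℝ)/2) * Real.exp ξ)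
    (ψ : ℝ → ℝ) (hψ : ∀ ξ : ℝ, ψ ξ = c^3 / (16 * (φ ξ - c))) :
    StrictAnti ψ ∧
    Tendsto ψ atBot (𝓝 (-(c^2) / 12)) ∧
    Tendsto ψ atTop (𝓝 (-(c^2) / 4)) := by
  set g : ℝ → ℝ := fun x => c^3 / (16 * (x - c))
  have hg_left : g (c/4) = -(c^2) / 12 := by simp only [g]; field_simp; ring
  have hg_right : g (3*c/4) = -(c^2) / 4 := by simp only [g]; field_simp; ring
  have hψg : ψ = g ∘ φ := funext hψ
  have hg_cont : ∀ x ≠ c, ContinuousAt g x := fun x hx =>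
    continuousAt_const.div (by fun_prop) (mul_ne_zero (by norm_num) (sub_ne_zero.2 hx))
  have hφ_lt : ∀ ξ, φ ξ ∈ Iio c := fun ξ => (hbd ξ).2.trans (by linarith)
  refine ⟨fun ξ₁ ξ₂ hξ => ?_, ?_, ?_⟩
  · rw [hψg]
    exact strictAntiOn_div_mul_sub (pow_pos hc 3) (by norm_num) (hφ_lt ξ₁) (hφ_lt ξ₂)
      (strictMono_of_rpow_eq_rpow_mul_exp (by norm_num) (by norm_num) hbd himp hξ)
  · have hlim := (hg_cont (c/4) (by linarith)).tendsto.comp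
      (tendsto_atBot_of_rpow_eq_rpow_mul_exp (by norm_num) (by norm_num) hbd himp)
    rwa [hψg, ← hg_left]
  · have hlim := (hg_cont (3*c/4) (by linarith)).tendsto.comp
      (tendsto_atTop_of_rpow_eq_rpow_mul_exp (by norm_num) (by norm_num) hbd himp)
    rwa [hψg, ← hg_right]
end
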